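/- Let X be a non-empty set, let Σ_Z be a σ-algebra on Z = X × {0,1} containing all finite subsets of Z, let 𝒟 be a set of probability measures on (Z, Σ_Z), and let H ⊆ {0,1}^X be a non-empty hypothesis space with Γ(h) ∈ Σ_Z for every h ∈ H. If H is universally separable, then H is well-behaved with respect to 𝒟. -/

import Mathlib

open MeasureTheory

namespace PAC

variable {X : Type*}

/-- The graph `Γ(h) = {(x,y) ∈ Z : h x = y}` of a hypothesis `h : X → {0,1}`. -/
def graph (h : X → Bool) : Set (X × Bool) := {z | h z.1 = z.2}

/-- The true error `er_D(h) = D(Z \ Γ(h))`. -/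
noncomputable def trueError [MeasurableSpace (X × Bool)]
    (D : Measure (X × Bool)) (h : X → Bool) : ℝ :=
  (D {z : X × Bool | h z.1 ≠ z.2}).toReal

/-- The sample error `ˆer_z(h) = (1/m)·#{i : h x_i ≠ y_i}`. -/
noncomputable def empError {m : ℕ} (z : Fin m → X × Bool) (h : X → Bool) : ℝ :=
  ((Finset.univ.filter fun i => h (z i).1 ≠ (z i).2).card : ℝ) / (m : ℝ)

/-- `opt_D(H) = inf_{h ∈ H} er_D(h)`. -/
noncomputable def optError [MeasurableSpace (X × Bool)]
    (D : Measure (X × Bool)) (H : Set (X → Bool)) : ℝ :=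
  ⨅ h : H, trueError D h.1

/-- `ˆopt_z(H) = inf_{h ∈ H} ˆer_z(h)`. -/
noncomputable def empOpt {m : ℕ} (z : Fin m → X × Bool) (H : Set (X → Bool)) : ℝ :=
  ⨅ h : H, empError z h.1

/-- The map `U : Z^m → [0,1]`, `z ↦ sup_{h ∈ H} |er_D(h) − ˆer_z(h)|`. -/
noncomputable def U [MeasurableSpace (X × Bool)] (H : Set (X → Bool))
    (m : ℕ) (D : Measure (X × Bool)) (z : Fin m → X × Bool) : ℝ :=
  ⨆ h : H, |trueError D h.1 - empError z h.1|

/-- The map `V : Z^m × Z^m = Z^{2m} → ℝ`,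
`(z,z') ↦ sup_{h ∈ H} |ˆer_{z'}(h) − ˆer_z(h)|`. -/
noncomputable def V (H : Set (X → Bool)) (m : ℕ)
    (p : (Fin m → X × Bool) × (Fin m → X × Bool)) : ℝ :=
  ⨆ h : H, |empError p.2 h.1 - empError p.1 h.1|

/-- `H` is well-behaved with respect to `𝒟`. -/
def WellBehaved [MeasurableSpace (X × Bool)] (H : Set (X → Bool))
    (𝒟 : Set (Measure (X × Bool))) : Prop :=
  (∀ h ∈ H, MeasurableSet (graph h)) ∧
  ∃ mH : ℕ, 0 < mH ∧ ∀ m : ℕ, mH ≤ m →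
    Measurable (V H m) ∧ ∀ D ∈ 𝒟, Measurable (U H m D)

/-- `H` has the uniform convergence property with respect to `𝒟`. -/
def UCP [MeasurableSpace (X × Bool)] (H : Set (X → Bool))
    (𝒟 : Set (Measure (X × Bool))) : Prop :=
  ∃ mH : ℕ, 0 < mH ∧
    (∀ m : ℕ, mH ≤ m → ∀ D ∈ 𝒟, Measurable (U H m D)) ∧
    ∀ ε ∈ Set.Ioo (0:ℝ) 1, ∀ δ ∈ Set.Ioo (0:ℝ) 1, ∃ m₀ : ℕ, mH ≤ m₀ ∧
      ∀ m : ℕ, m₀ ≤ m → ∀ D ∈ 𝒟,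
        ENNReal.ofReal (1 - δ) ≤
          Measure.pi (fun _ : Fin m => D) {z | U H m D z ≤ ε}

/-- A learning function `A` (defined on all multi-samples) whose values lie in `H`. -/
def IsLearningFunction (H : Set (X → Bool))
    (A : ∀ m : ℕ, (Fin m → X × Bool) → (X → Bool)) : Prop :=
  ∀ (m : ℕ) (z : Fin m → X × Bool), A m z ∈ H

/-- The learning function `A` is PAC with respect to `𝒟`. -/
def IsPAC [MeasurableSpace (X × Bool)] (H : Set (X → Bool))
    (𝒟 : Set (Measure (X × Bool)))
    (A : ∀ m : ℕ, (Fin m → X × Bool) → (X → Bool)) : Prop :=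
  ∀ ε ∈ Set.Ioo (0:ℝ) 1, ∀ δ ∈ Set.Ioo (0:ℝ) 1, ∃ m₀ : ℕ, 0 < m₀ ∧
    ∀ m : ℕ, m₀ ≤ m → ∀ D ∈ 𝒟, ∃ C : Set (Fin m → X × Bool),
      MeasurableSet C ∧
      C ⊆ {z | trueError D (A m z) - optError D H ≤ ε} ∧
      ENNReal.ofReal (1 - δ) ≤ Measure.pi (fun _ : Fin m => D) C

/-- `H` is PAC learnable with respect to `𝒟`. -/
def PACLearnable [MeasurableSpace (X × Bool)] (H : Set (X → Bool))
    (𝒟 : Set (Measure (X × Bool))) : Prop :=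
  ∃ A : ∀ m : ℕ, (Fin m → X × Bool) → (X → Bool),
    IsLearningFunction H A ∧ IsPAC H 𝒟 A

/-- The learning function `A` nearly minimizes the sample error. -/
def IsNMSE (H : Set (X → Bool))
    (A : ∀ m : ℕ, (Fin m → X × Bool) → (X → Bool)) : Prop :=
  ∀ ε ∈ Set.Ioo (0:ℝ) 1, ∃ m₀ : ℕ, 0 < m₀ ∧
    ∀ m : ℕ, m₀ ≤ m → ∀ z : Fin m → X × Bool,
      empError z (A m z) - empOpt z H ≤ ε

/-- `H` shatters the finite set `A ⊆ X`. -/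
def Shatters (H : Set (X → Bool)) (A : Finset X) : Prop :=
  ∀ f : X → Bool, ∃ h ∈ H, ∀ x ∈ A, h x = f x

/-- `vc(H) < ∞`. -/
def FiniteVC (H : Set (X → Bool)) : Prop :=
  ∃ d : ℕ, ∀ A : Finset X, Shatters H A → A.card ≤ d

/-- A discrete uniform distribution on `(Z, Σ_Z)`. -/
def IsDiscreteUniform [MeasurableSpace (X × Bool)]
    (D : Measure (X × Bool)) : Prop :=
  ∃ (ℓ : ℕ), 0 < ℓ ∧ ∃ z : Fin ℓ → X × Bool,
    D = (ℓ : ENNReal)⁻¹ • ∑ j, Measure.dirac (z j)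


/-- `H` is universally separable: some countable `H₀ ⊆ H` is pointwise dense in `H`
(in the eventually-equal sense). -/
def UniversallySeparable {X : Type*} (H : Set (X → Bool)) : Prop :=
  ∃ H₀ : Set (X → Bool), H₀ ⊆ H ∧ H₀.Countable ∧
    ∀ h ∈ H, ∃ g : ℕ → (X → Bool), (∀ n, g n ∈ H₀) ∧
      ∀ x : X, ∃ N : ℕ, ∀ n : ℕ, N ≤ n → g n x = h x


/-
For each sample the suprema defining `U` and `V` may be taken over the countable
set `H₀` instead of `H`, which makes them measurable. Indeed, if `gₙ ∈ H₀` converges pointwise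
to `h` in the eventually-constant sense, then `gₙ` eventually agrees with `h` on the finitely
many sample points, so the sample errors of `gₙ` are eventually those of `h`, and the error
sets of `gₙ` converge pointwise to that of `h`, so `er_D(gₙ) → er_D(h)`. Hence every term of
the supremum over `H` is a limit of terms of the supremum over `H₀`, and the two suprema agree.
-/

end PAC

open Filter Topology

theorem Real.sSup_eq_of_subset_of_subset_closure {s t : Set ℝ} (hst : s ⊆ t)
    (hts : t ⊆ closure s) : sSup t = sSup s := by
  rcases s.eq_empty_or_nonempty with rfl | hne
  · rw [closure_empty, Set.subset_empty_iff] at hts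
    rw [hts]
  by_cases hbdd : BddAbove s
  · exact ((isLUB_iff_of_subset_of_subset_closure hst hts).1 (isLUB_csSup hne hbdd)).csSup_eq
      (hne.mono hst)
  · rw [Real.sSup_of_not_bddAbove hbdd,
      Real.sSup_of_not_bddAbove fun h => hbdd (h.mono hst)]

theorem Real.iSup_subtype_eq_of_subset_of_tendsto {ι : Type*} {H₀ H : Set ι} (f : ι → ℝ)
    (hsub : H₀ ⊆ H)
    (happrox : ∀ h ∈ H, ∃ g : ℕ → ι, (∀ n, g n ∈ H₀) ∧ Tendsto (f ∘ g) atTop (𝓝 (f h))) :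
    ⨆ h : H, f h = ⨆ h : H₀, f h := by
  rw [← sSup_image', ← sSup_image']
  refine Real.sSup_eq_of_subset_of_subset_closure (Set.image_mono hsub) ?_
  rintro _ ⟨h, hh, rfl⟩
  obtain ⟨g, hg, hlim⟩ := happrox h hh
  exact mem_closure_of_tendsto hlim (Eventually.of_forall fun n => Set.mem_image_of_mem f (hg n))

theorem measurable_iSup_of_countable_of_tendsto {α ι : Type*} [MeasurableSpace α]
    {H₀ H : Set ι} (hsub : H₀ ⊆ H) (hcount : H₀.Countable) {F : ι → α → ℝ}
    (hmeas : ∀ h ∈ H₀, Measurable (F h))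
    (happrox : ∀ h ∈ H, ∃ g : ℕ → ι, (∀ n, g n ∈ H₀) ∧
      ∀ a, Tendsto (fun n => F (g n) a) atTop (𝓝 (F h a))) :
    Measurable fun a => ⨆ h : H, F h a := by
  have hsup : (fun a => ⨆ h : H, F h a) = fun a => ⨆ h : H₀, F h a :=
    funext fun a => Real.iSup_subtype_eq_of_subset_of_tendsto (F · a) hsub fun h hh =>
      (happrox h hh).imp fun _ hg => ⟨hg.1, hg.2 a⟩
  have : Countable H₀ := hcount.to_subtype
  rw [hsup]
  exact Measurable.iSup fun h => hmeas h h.2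

namespace PAC

variable {X : Type*}

theorem empError_congr {m : ℕ} (z : Fin m → X × Bool) {h₁ h₂ : X → Bool}
    (hag : ∀ i, h₁ (z i).1 = h₂ (z i).1) : empError z h₁ = empError z h₂ := by
  simp only [empError, hag]

theorem empError_eq_sum_indicator {m : ℕ} (z : Fin m → X × Bool) (h : X → Bool) :
    empError z h = (∑ i, (graph h)ᶜ.indicator 1 (z i)) / m := by
  classical
  simp [empError, Finset.card_filter, Set.indicator_apply, graph]

theorem measurable_empError [MeasurableSpace (X × Bool)] {m : ℕ} {h : X → Bool}
    (hh : MeasurableSet (graph h)) : Measurable fun z : Fin m → X × Bool => empError z h := by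
  simp only [empError_eq_sum_indicator]
  exact (Finset.measurable_sum _ fun i _ =>
    (measurable_const.indicator hh.compl).comp (measurable_pi_apply i)).div_const _

theorem tendsto_empError {ι : Type*} {L : Filter ι} {g : ι → X → Bool} {h : X → Bool}
    (hg : ∀ x, ∀ᶠ n in L, g n x = h x) {m : ℕ} (z : Fin m → X × Bool) :
    Tendsto (fun n => empError z (g n)) L (𝓝 (empError z h)) := by
  have hsample : ∀ᶠ n in L, ∀ i, g n (z i).1 = h (z i).1 :=
    eventually_all.2 fun i => hg (z i).1
  exact tendsto_const_nhds.congr' (hsample.mono fun n hn => (empError_congr z hn).symm)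

theorem tendsto_trueError [MeasurableSpace (X × Bool)] (D : Measure (X × Bool))
    [IsFiniteMeasure D] {ι : Type*} {L : Filter ι} [L.IsCountablyGenerated]
    {g : ι → X → Bool} {h : X → Bool}
    (hmeas : ∀ n, MeasurableSet (graph (g n))) (hg : ∀ x, ∀ᶠ n in L, g n x = h x) :
    Tendsto (fun n => trueError D (g n)) L (𝓝 (trueError D h)) := by
  have hsets : Tendsto (fun n => D {z : X × Bool | g n z.1 ≠ z.2}) L
      (𝓝 (D {z : X × Bool | h z.1 ≠ z.2})) :=
    tendsto_measure_of_tendsto_indicator_of_isFiniteMeasure L D (fun n => (hmeas n).compl)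
      fun z => (hg z.1).mono fun n hn => by simp only [Set.mem_ofPred_eq, hn]
  exact (ENNReal.tendsto_toReal (measure_ne_top D _)).comp hsets

theorem universallySeparable_implies_wellBehaved_general
    {X : Type*} [MeasurableSpace (X × Bool)]
    (𝒟 : Set (Measure (X × Bool)))
    (h𝒟prob : ∀ D ∈ 𝒟, IsProbabilityMeasure D)
    (H : Set (X → Bool))
    (hgraph : ∀ h ∈ H, MeasurableSet (graph h))
    (hus : UniversallySeparable H) :
    WellBehaved H 𝒟 := by
  obtain ⟨H₀, hsub, hcount, happrox⟩ := hus
  have hlim : ∀ h ∈ H, ∃ g : ℕ → X → Bool, (∀ n, g n ∈ H₀) ∧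
      ∀ x, ∀ᶠ n in atTop, g n x = h x := fun h hh =>
    (happrox h hh).imp fun _ hg => ⟨hg.1, fun x => eventually_atTop.2 (hg.2 x)⟩
  have hmeas₀ : ∀ {m : ℕ}, ∀ h ∈ H₀, Measurable fun z : Fin m → X × Bool => empError z h :=
    fun h hh => measurable_empError (hgraph h (hsub hh))
  refine ⟨hgraph, 1, one_pos, fun m _ => ⟨?_, fun D hD => ?_⟩⟩
  · refine measurable_iSup_of_countable_of_tendsto hsub hcount
      (F := fun h (p : (Fin m → X × Bool) × (Fin m → X × Bool)) =>
        |empError p.2 h - empError p.1 h|)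
      (fun h hh => (((hmeas₀ h hh).comp measurable_snd).sub
        ((hmeas₀ h hh).comp measurable_fst)).abs)
      fun h hh => ?_
    obtain ⟨g, hg, hgh⟩ := hlim h hh
    exact ⟨g, hg, fun p => ((tendsto_empError hgh p.2).sub (tendsto_empError hgh p.1)).abs⟩
  · have := h𝒟prob D hD
    refine measurable_iSup_of_countable_of_tendsto hsub hcount
      (F := fun h (z : Fin m → X × Bool) => |trueError D h - empError z h|)
      (fun h hh => (measurable_const.sub (hmeas₀ h hh)).abs) fun h hh => ?_
    obtain ⟨g, hg, hgh⟩ := hlim h hh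
    exact ⟨g, hg, fun z => ((tendsto_trueError D (fun n => hgraph _ (hsub (hg n))) hgh).sub
      (tendsto_empError hgh z)).abs⟩

/-- A universally separable hypothesis space with measurable graphs is well-behaved
with respect to any set of probability distributions. -/
theorem universallySeparable_implies_wellBehaved
    {X : Type*} [Nonempty X] [MeasurableSpace (X × Bool)]
    (hfin : ∀ z : X × Bool, MeasurableSet {z})
    (𝒟 : Set (Measure (X × Bool)))
    (h𝒟prob : ∀ D ∈ 𝒟, IsProbabilityMeasure D)
    (H : Set (X → Bool)) (hH : H.Nonempty)
    (hgraph : ∀ h ∈ H, MeasurableSet (graph h))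
    (hus : UniversallySeparable H) :
    WellBehaved H 𝒟 :=
  universallySeparable_implies_wellBehaved_general 𝒟 h𝒟prob H hgraph hus

end PAC
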